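/- arXiv:2311.06832 — 2 statements merged into one kernel-verified Lean document; each statement's English description precedes it below -/
import Mathlib

section
/- Let X be a nonempty subset of a Banach space E and let T : X → 2^E be a set-valued mapping such that (1) for every x ∈ X, T(x) is a nonempty weakly closed subset of E; (2) there exists x₀ ∈ X such that T(x₀) is weakly compact in E; (3) for every finite set {x₁,…,xₙ} ⊆ X, the convex hull co{x₁,…,xₙ} is contained in ⋃_{i=1}^n T(xᵢ). Then ⋂_{x∈X} (T(x) ∩ T(x₀)) ≠ ∅; in particular ⋂_{x∈X} T(x) ≠ ∅. -/
/-!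
Each `T x` is closed, being weakly closed, so by weak compactness of `T x₀` it suffices that
`T x₀` together with finitely many `T x` has a common point. For a finite family this is the
Knaster–Kuratowski–Mazurkiewicz lemma, pulled back along `ξ ↦ ∑ ξ j • x j` from the standard
simplex; KKM follows from Brouwer's fixed point theorem applied to
`ξ ↦ (ξ + β ξ) / (1 + ∑ i, β ξ i)` with `β ξ i = infDist ξ (C i)`.

Brouwer's theorem is proved analytically. If `r` is a `C¹` self-map of the closed unit ball fixing
the sphere, then `s ↦ ∫ det D((1 - s) • id + s • r)` is a polynomial in `s` which equals the
volume of the ball for small `s > 0`, by the change of variables formula; hence so is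
`∫ det Dr`. A map into the sphere has `det Dr = 0`, so no such retraction exists, and a smooth
self-map of the ball without fixed points would produce one. Smoothing and the metric projection
onto a compact convex set reduce the continuous case to the smooth one.
-/

open Set Metric MeasureTheory Filter Topology Polynomial

theorem exists_eval_eq_integral_of_forall_natDegree_le {α : Type*} [MeasurableSpace α]
    (μ : Measure α) (F : ℝ → α → ℝ) (n : ℕ) (hF : ∀ s, Integrable (F s) μ)
    (hpoly : ∀ x, ∃ p : ℝ[X], p.natDegree ≤ n ∧ ∀ s, p.eval s = F s x) :
    ∃ P : ℝ[X], ∀ s, P.eval s = ∫ x, F s x ∂μ := by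
  classical
  set nodes := Finset.range (n + 1)
  set v : ℕ → ℝ := fun i => i
  have hinj : InjOn v nodes := fun i _ j _ h => Nat.cast_injective h
  -- a polynomial of degree `≤ n` is the Lagrange interpolant of its values at `0, …, n`
  have hinterp : ∀ s x, F s x = ∑ i ∈ nodes, F (v i) x * (Lagrange.basis nodes v i).eval s := by
    intro s x
    obtain ⟨p, hpn, hp⟩ := hpoly x
    have hlt : p.natDegree < nodes.card := by simp [nodes]; omega
    have hdeg : p.degree < nodes.card := degree_le_natDegree.trans_lt (WithBot.coe_lt_coe.2 hlt)
    rw [← hp, Lagrange.eq_interpolate_of_eval_eq (fun i => F (v i) x) hinj hdeg fun i _ => hp _,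
      Lagrange.interpolate_apply, eval_finsetSum]
    simp
  refine ⟨∑ i ∈ nodes, C (∫ x, F (v i) x ∂μ) * Lagrange.basis nodes v i, fun s => ?_⟩
  simp_rw [hinterp s, eval_finsetSum, eval_mul, eval_C]
  rw [integral_finsetSum _ fun i _ => (hF (v i)).mul_const _]
  simp_rw [integral_mul_const]

section NormedSpace

variable {E : Type*} [NormedAddCommGroup E] [NormedSpace ℝ E]

theorem ContinuousLinearMap.eventually_det_pos : ∀ᶠ g in 𝓝 (1 : E →L[ℝ] E), 0 < g.det := by
  have h := (ContinuousLinearMap.continuous_det (𝕜 := ℝ) (E := E)).continuousAt (x := 1)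
  have h1 : (0 : ℝ) < (1 : E →L[ℝ] E).det := by simp [ContinuousLinearMap.det]
  exact h.eventually (lt_mem_nhds h1)

theorem closedBall_subset_image_of_eqOn_sphere [ProperSpace E] {f : E → E}
    (hf : ContinuousOn f (closedBall 0 1)) (hsph : ∀ x ∈ sphere (0 : E) 1, f x = x)
    (hopen : ∀ x ∈ ball (0 : E) 1, f '' ball 0 1 ∈ 𝓝 (f x))
    (hne : (f '' closedBall 0 1 ∩ ball 0 1).Nonempty) :
    closedBall (0 : E) 1 ⊆ f '' closedBall 0 1 := by
  set S := f '' closedBall (0 : E) 1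
  have hS : IsClosed S := ((isCompact_closedBall 0 1).image_of_continuousOn hf).isClosed
  have hSopen : IsOpen (S ∩ ball 0 1) := by
    refine isOpen_iff_mem_nhds.2 ?_
    rintro _ ⟨⟨x, hx, rfl⟩, hfx⟩
    have hx' : x ∈ ball (0 : E) 1 := by
      rw [mem_ball_zero_iff]
      refine (mem_closedBall_zero_iff.1 hx).lt_of_ne fun h => ?_
      rw [hsph x (mem_sphere_zero_iff_norm.2 h), mem_ball_zero_iff, h] at hfx
      exact lt_irrefl _ hfx
    exact inter_mem (mem_of_superset (hopen x hx') (image_mono ball_subset_closedBall))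
      (isOpen_ball.mem_nhds hfx)
  have hball : ball (0 : E) 1 ⊆ S ∩ ball 0 1 := by
    refine (convex_ball 0 1).isPreconnected.subset_of_closure_inter_subset hSopen
      (hne.mono fun y hy => ⟨hy.2, hy⟩) ?_
    exact fun y ⟨hy, hyb⟩ => ⟨hS.closure_subset (closure_mono inter_subset_left hy), hyb⟩
  rw [← closure_ball (0 : E) one_ne_zero]
  exact hS.closure_subset_iff.2 fun y hy => (hball hy).1

variable [FiniteDimensional ℝ E]

theorem ContinuousLinearMap.exists_natDegree_le_eval_eq_det_one_add_smul (g : E →L[ℝ] E) :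
    ∃ p : ℝ[X], p.natDegree ≤ Module.finrank ℝ E ∧ ∀ s : ℝ, p.eval s = (1 + s • g).det := by
  classical
  set b := Module.finBasis ℝ E
  obtain ⟨M, hM⟩ : ∃ M, ∀ s : ℝ, LinearMap.toMatrix b b ((1 + s • g : E →L[ℝ] E) : E →ₗ[ℝ] E)
      = 1 + s • M := ⟨LinearMap.toMatrix b b g, fun s => by simp [LinearMap.toMatrix_one]⟩
  refine ⟨((X : ℝ[X]) • M.map C + (1 : Matrix _ _ ℝ).map C).det, ?_, fun s => ?_⟩
  · simpa using natDegree_det_X_add_C_le M 1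
  · rw [← coe_evalRingHom, RingHom.map_det, ContinuousLinearMap.det, ← LinearMap.det_toMatrix b,
      hM]
    congr 1
    ext i j
    rw [RingHom.mapMatrix_apply]
    simp only [Matrix.map_apply, Matrix.add_apply, Matrix.smul_apply, Matrix.one_apply]
    rw [coe_evalRingHom, eval_add, smul_eq_mul, eval_mul, eval_X, eval_C, eval_C, smul_eq_mul,
      add_comm]

theorem HasStrictFDerivAt.image_mem_nhds_of_det_ne_zero {f : E → E} {f' : E →L[ℝ] E} {x : E}
    (hf : HasStrictFDerivAt f f' x) (hdet : f'.det ≠ 0) {s : Set E} (hs : s ∈ 𝓝 x) :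
    f '' s ∈ 𝓝 (f x) := by
  have hf' : HasStrictFDerivAt f (f'.toContinuousLinearEquivOfDetNeZero hdet : E →L[ℝ] E) x := by
    rwa [ContinuousLinearMap.coe_toContinuousLinearEquivOfDetNeZero]
  rw [← hf'.map_nhds_eq_of_equiv]
  exact image_mem_map hs

variable [MeasurableSpace E] [BorelSpace E]

theorem exists_eval_eq_setIntegral_det_one_add_smul (μ : Measure E) [IsFiniteMeasureOnCompacts μ]
    {K : Set E} (hK : IsCompact K) {A : E → E →L[ℝ] E} (hA : ContinuousOn A K) :
    ∃ P : ℝ[X], ∀ s : ℝ, P.eval s = ∫ x in K, (1 + s • A x).det ∂μ :=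
  exists_eval_eq_integral_of_forall_natDegree_le _ (fun s x => (1 + s • A x).det) _
    (fun s => (ContinuousLinearMap.continuous_det.comp_continuousOn
      (continuousOn_const.add (hA.const_smul s))).integrableOn_compact hK)
    fun x => (A x).exists_natDegree_le_eval_eq_det_one_add_smul

theorem setIntegral_det_eq_measureReal_closedBall (μ : Measure E) [μ.IsAddHaarMeasure]
    {f : E → E} {f' : E → E →L[ℝ] E}
    (hf : ∀ x ∈ closedBall (0 : E) 1, HasStrictFDerivAt f (f' x) x)
    (hdet : ∀ x ∈ closedBall (0 : E) 1, 0 < (f' x).det)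
    (hinj : InjOn f (closedBall 0 1)) (hmaps : MapsTo f (closedBall 0 1) (closedBall 0 1))
    (hsph : ∀ x ∈ sphere (0 : E) 1, f x = x) (hne : (f '' closedBall 0 1 ∩ ball 0 1).Nonempty) :
    ∫ x in closedBall (0 : E) 1, (f' x).det ∂μ = μ.real (closedBall 0 1) := by
  have himage : f '' closedBall 0 1 = closedBall 0 1 := by
    refine hmaps.image_subset.antisymm (closedBall_subset_image_of_eqOn_sphere
      (fun x hx => (hf x hx).continuousAt.continuousWithinAt) hsph (fun x hx => ?_) hne)
    exact (hf x (ball_subset_closedBall hx)).image_mem_nhds_of_det_ne_zero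
      (hdet x (ball_subset_closedBall hx)).ne' (isOpen_ball.mem_nhds hx)
  have hcov := integral_image_eq_integral_abs_det_fderiv_smul μ measurableSet_closedBall
    (fun x hx => (hf x hx).hasFDerivAt.hasFDerivWithinAt) hinj (fun _ => (1 : ℝ))
  rw [himage, setIntegral_const, smul_eq_mul, mul_one] at hcov
  rw [hcov]
  refine setIntegral_congr_fun measurableSet_closedBall fun x hx => ?_
  simp [abs_of_pos (hdet x hx)]

theorem setIntegral_det_one_add_smul_eq_measureReal (μ : Measure E) [μ.IsAddHaarMeasure]
    {r : E → E} {r' : E → E →L[ℝ] E}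
    (hr : ∀ x ∈ closedBall (0 : E) 1, HasStrictFDerivAt r (r' x) x)
    (hmaps : MapsTo r (closedBall 0 1) (closedBall 0 1)) (hsph : ∀ x ∈ sphere (0 : E) 1, r x = x)
    {L s : ℝ} (hL : ∀ x ∈ closedBall (0 : E) 1, ‖r' x - 1‖ ≤ L) (hs₀ : 0 < s) (hs₁ : s < 1)
    (hsL : s * L < 1) (hdet : ∀ x ∈ closedBall (0 : E) 1, 0 < (1 + s • (r' x - 1)).det) :
    ∫ x in closedBall (0 : E) 1, (1 + s • (r' x - 1)).det ∂μ = μ.real (closedBall 0 1) := by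
  set w : E → E := fun x => r x - x
  have hw : ∀ x ∈ closedBall (0 : E) 1, HasStrictFDerivAt w (r' x - 1) x :=
    fun x hx => (hr x hx).sub (hasStrictFDerivAt_id x)
  have hlip : ∀ x ∈ closedBall (0 : E) 1, ∀ y ∈ closedBall (0 : E) 1,
      ‖w y - w x‖ ≤ L * ‖y - x‖ := fun x hx y hy =>
    (convex_closedBall 0 1).norm_image_sub_le_of_norm_fderiv_le
      (fun z hz => (hw z hz).differentiableAt)
      (fun z hz => (hw z hz).hasFDerivAt.fderiv ▸ hL z hz) hx hy
  refine setIntegral_det_eq_measureReal_closedBall μ (f := fun x => x + s • w x)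
    (fun x hx => (hasStrictFDerivAt_id x).add ((hw x hx).const_smul s)) hdet ?_
    (fun x hx => (convex_closedBall 0 1).add_smul_sub_mem hx (hmaps hx) ⟨hs₀.le, hs₁.le⟩)
    (fun x hx => by simp [w, hsph x hx]) ⟨s • r 0, ⟨0, by simp [w]⟩, ?_⟩
  · intro x hx y hy hxy
    have hxy' : x - y = s • (w y - w x) := by
      rw [smul_sub, sub_eq_sub_iff_add_eq_add, add_comm (s • w y)]
      exact hxy
    have hle : ‖x - y‖ ≤ s * L * ‖x - y‖ := calc
      ‖x - y‖ = s * ‖w y - w x‖ := by rw [hxy', norm_smul, Real.norm_of_nonneg hs₀.le]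
      _ ≤ s * (L * ‖y - x‖) := mul_le_mul_of_nonneg_left (hlip x hx y hy) hs₀.le
      _ = s * L * ‖x - y‖ := by rw [norm_sub_rev]; ring
    have : ‖x - y‖ = 0 := by nlinarith [norm_nonneg (x - y)]
    exact sub_eq_zero.1 (norm_eq_zero.1 this)
  · rw [mem_ball_zero_iff, norm_smul, Real.norm_of_nonneg hs₀.le]
    have := mem_closedBall_zero_iff.1 (hmaps (mem_closedBall_self zero_le_one))
    nlinarith

theorem setIntegral_det_fderiv_eq_measureReal (μ : Measure E) [μ.IsAddHaarMeasure]
    {U : Set E} (hU : IsOpen U) (hBU : closedBall (0 : E) 1 ⊆ U) {r : E → E}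
    (hr : ContDiffOn ℝ 1 r U) (hmaps : MapsTo r (closedBall 0 1) (closedBall 0 1))
    (hsph : ∀ x ∈ sphere (0 : E) 1, r x = x) :
    ∫ x in closedBall (0 : E) 1, (fderiv ℝ r x).det ∂μ = μ.real (closedBall 0 1) := by
  have hr' : ∀ x ∈ closedBall (0 : E) 1, HasStrictFDerivAt r (fderiv ℝ r x) x := fun x hx =>
    (hr.contDiffAt (hU.mem_nhds (hBU hx))).hasStrictFDerivAt one_ne_zero
  have hA : ContinuousOn (fun x => fderiv ℝ r x - 1) (closedBall (0 : E) 1) :=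
    ((hr.continuousOn_fderiv_of_isOpen hU le_rfl).mono hBU).sub continuousOn_const
  obtain ⟨L, hL⟩ := (isCompact_closedBall (0 : E) 1).exists_bound_of_continuousOn hA
  have hL₀ : 0 ≤ L := (norm_nonneg _).trans (hL 0 (mem_closedBall_self zero_le_one))
  obtain ⟨δ, hδ, hdet⟩ :=
    Metric.eventually_nhds_iff.1 (ContinuousLinearMap.eventually_det_pos (E := E))
  obtain ⟨P, hP⟩ := exists_eval_eq_setIntegral_det_one_add_smul μ (isCompact_closedBall 0 1) hA
  -- `P` is constant on `(0, ε)`, hence everywhere, and its value at `1` is the integral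
  set ε := min δ 1 / (L + 1)
  have hconst : ∀ s ∈ Ioo 0 ε, P.eval s = (C (μ.real (closedBall (0 : E) 1))).eval s := by
    rintro s ⟨hs₀, hsε⟩
    have hsL : s * L < min δ 1 := by
      rw [lt_div_iff₀ (by linarith)] at hsε
      nlinarith
    have hs₁ : s < 1 := by
      have : ε ≤ 1 := div_le_one_of_le₀ ((min_le_right _ _).trans (by linarith)) (by linarith)
      linarith
    rw [hP, eval_C]
    refine setIntegral_det_one_add_smul_eq_measureReal μ hr' hmaps hsph hL hs₀ hs₁
      (hsL.trans_le (min_le_right _ _)) fun x hx => hdet ?_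
    rw [dist_eq_norm, add_sub_cancel_left, norm_smul, Real.norm_of_nonneg hs₀.le]
    exact (mul_le_mul_of_nonneg_left (hL x hx) hs₀.le).trans_lt
      (hsL.trans_le (min_le_left _ _))
  have hPC := eq_of_infinite_eval_eq P _ ((Ioo_infinite (by positivity)).mono hconst)
  simpa [hPC] using (hP 1).symm

end NormedSpace

section InnerProductSpace

variable {E : Type*} [NormedAddCommGroup E] [InnerProductSpace ℝ E]

/-- The parameter `t ≥ 0` at which the ray `t ↦ x + t • u` from a point `x` of the closed unit ball
meets the unit sphere: the larger root of `‖x + t • u‖ ^ 2 = 1`. -/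
noncomputable def rayExit (x u : E) : ℝ :=
  (-inner ℝ x u + √(inner ℝ x u ^ 2 + (1 - ‖x‖ ^ 2) * ‖u‖ ^ 2)) / ‖u‖ ^ 2

theorem norm_add_rayExit_smul {x u : E} (hu : u ≠ 0)
    (hd : 0 ≤ inner ℝ x u ^ 2 + (1 - ‖x‖ ^ 2) * ‖u‖ ^ 2) : ‖x + rayExit x u • u‖ = 1 := by
  set t := rayExit x u
  have hq : 0 < ‖u‖ ^ 2 := by positivity
  have ht : ‖u‖ ^ 2 * t + inner ℝ x u = √(inner ℝ x u ^ 2 + (1 - ‖x‖ ^ 2) * ‖u‖ ^ 2) := by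
    simp only [t, rayExit]
    field_simp
    ring
  have hroot : ‖u‖ ^ 2 * (‖u‖ ^ 2 * t ^ 2 + 2 * t * inner ℝ x u + ‖x‖ ^ 2 - 1) = 0 := by
    have := congrArg (· ^ 2) ht
    simp only [Real.sq_sqrt hd] at this
    linear_combination this
  have hsq : ‖x + t • u‖ ^ 2 = 1 := by
    rw [norm_add_sq_real, inner_smul_right, norm_smul, Real.norm_eq_abs, mul_pow, sq_abs]
    linear_combination (mul_eq_zero.1 hroot).resolve_left hq.ne'
  exact (pow_eq_one_iff_of_nonneg (norm_nonneg _) two_ne_zero).1 hsq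

theorem rayExit_eq_zero {x u : E} (hx : ‖x‖ = 1) (hxu : 0 ≤ inner ℝ x u) : rayExit x u = 0 := by
  simp [rayExit, hx, Real.sqrt_sq hxu]

theorem exists_retraction_of_forall_ne {g : E → E} (hg : ContDiff ℝ 1 g)
    (hmaps : MapsTo g (closedBall 0 1) (closedBall 0 1))
    (hfix : ∀ x ∈ closedBall (0 : E) 1, g x ≠ x) :
    ∃ U, IsOpen U ∧ closedBall (0 : E) 1 ⊆ U ∧ ∃ r : E → E, ContDiffOn ℝ 1 r U ∧
      MapsTo r (closedBall 0 1) (sphere 0 1) ∧ ∀ x ∈ sphere (0 : E) 1, r x = x := by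
  set u : E → E := fun x => x - g x
  set b : E → ℝ := fun x => inner ℝ x (u x)
  set d : E → ℝ := fun x => b x ^ 2 + (1 - ‖x‖ ^ 2) * ‖u x‖ ^ 2
  have hu : ContDiff ℝ 1 u := contDiff_id.sub hg
  have hb : ContDiff ℝ 1 b := contDiff_id.inner ℝ hu
  have hd : ContDiff ℝ 1 d :=
    (hb.pow 2).add ((contDiff_const.sub (contDiff_norm_sq ℝ)).mul (hu.norm_sq ℝ))
  have hu₀ : ∀ x, 0 < d x → u x ≠ 0 := fun x hx hux => by simp [d, b, hux] at hx
  -- on the sphere, `⟪x, g x⟫ < 1` because `g x ≠ x` lies in the closed ball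
  have hb₀ : ∀ x ∈ sphere (0 : E) 1, 0 < b x := by
    intro x hx
    have hgx := mem_closedBall_zero_iff.1 (hmaps (sphere_subset_closedBall hx))
    have hne := norm_pos_iff.2 (sub_ne_zero.2 (hfix x (sphere_subset_closedBall hx)).symm)
    have := norm_sub_sq_real x (g x)
    simp only [b, u, inner_sub_right, real_inner_self_eq_norm_sq,
      mem_sphere_zero_iff_norm.1 hx] at this ⊢
    linarith [pow_pos hne 2, pow_le_one₀ (n := 2) (norm_nonneg _) hgx]
  have hBU : ∀ x ∈ closedBall (0 : E) 1, 0 < d x := by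
    intro x hx
    rcases (mem_closedBall_zero_iff.1 hx).lt_or_eq with hx1 | hx1
    · have : 0 < ‖u x‖ := norm_pos_iff.2 (sub_ne_zero.2 (hfix x hx).symm)
      have : 0 < 1 - ‖x‖ ^ 2 := by nlinarith [norm_nonneg x]
      exact add_pos_of_nonneg_of_pos (sq_nonneg _) (by positivity)
    · have := hb₀ x (mem_sphere_zero_iff_norm.2 hx1)
      simp only [d, hx1]
      positivity
  refine ⟨{x | 0 < d x}, isOpen_lt continuous_const hd.continuous, hBU,
    fun x => x + rayExit x (u x) • u x, fun x hx => ?_, fun x hx => ?_, fun x hx => ?_⟩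
  · have hq : ‖u x‖ ^ 2 ≠ 0 := pow_ne_zero 2 (norm_ne_zero_iff.2 (hu₀ x hx))
    refine (contDiffAt_id.add (ContDiffAt.smul ?_ hu.contDiffAt)).contDiffWithinAt
    exact (hb.contDiffAt.neg.add (hd.contDiffAt.sqrt (ne_of_gt hx))).div
      ((hu.norm_sq ℝ).contDiffAt) hq
  · exact mem_sphere_zero_iff_norm.2 (norm_add_rayExit_smul (hu₀ x (hBU x hx)) (hBU x hx).le)
  · simp [rayExit_eq_zero (mem_sphere_zero_iff_norm.1 hx) (hb₀ x hx).le]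

theorem exists_lipschitzWith_retraction_of_convex {K : Set E} (hne : K.Nonempty)
    (hK : IsComplete K) (hconv : Convex ℝ K) :
    ∃ p : E → E, LipschitzWith 1 p ∧ (∀ x, p x ∈ K) ∧ ∀ x ∈ K, p x = x := by
  have hproj : ∀ z, ∃ v ∈ K, ∀ y ∈ K, inner ℝ (z - v) (y - v) ≤ 0 := fun z => by
    obtain ⟨v, hvK, hv⟩ := exists_norm_eq_iInf_of_complete_convex hne hK hconv z
    exact ⟨v, hvK, (norm_eq_iInf_iff_real_inner_le_zero hconv hvK).1 hv⟩
  choose p hpK hp using hproj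
  refine ⟨p, LipschitzWith.of_dist_le_mul fun z₁ z₂ => ?_, hpK, fun x hx => ?_⟩
  · rw [dist_eq_norm, dist_eq_norm, NNReal.coe_one, one_mul]
    -- add the variational inequalities at `z₁` and `z₂`
    have h₁ := hp z₁ (p z₂) (hpK z₂)
    have h₂ := hp z₂ (p z₁) (hpK z₁)
    have key : ‖p z₁ - p z₂‖ ^ 2 ≤ inner ℝ (z₁ - z₂) (p z₁ - p z₂) := by
      rw [← real_inner_self_eq_norm_sq]
      have e₁ : inner ℝ (z₁ - p z₁) (p z₂ - p z₁) = -inner ℝ (z₁ - p z₁) (p z₁ - p z₂) := by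
        rw [← inner_neg_right, neg_sub]
      have e₂ : inner ℝ (z₁ - z₂) (p z₁ - p z₂) = inner ℝ (z₁ - p z₁) (p z₁ - p z₂)
          + inner ℝ (p z₁ - p z₂) (p z₁ - p z₂) - inner ℝ (z₂ - p z₂) (p z₁ - p z₂) := by
        rw [← inner_add_left, ← inner_sub_left]
        congr 1
        abel
      linarith
    have := key.trans (real_inner_le_norm _ _)
    nlinarith [norm_nonneg (p z₁ - p z₂), norm_nonneg (z₁ - z₂)]
  · have := hp x x hx
    rw [real_inner_self_nonpos, sub_eq_zero] at this
    exact this.symm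

variable [FiniteDimensional ℝ E]

theorem HasFDerivAt.det_eq_zero_of_eventually_norm_eq_one {r : E → E} {r' : E →L[ℝ] E} {x : E}
    (hr : HasFDerivAt r r' x) (h : ∀ᶠ y in 𝓝 x, ‖r y‖ = 1) : r'.det = 0 := by
  by_contra hdet
  have hconst : HasFDerivAt (‖r ·‖ ^ 2) (0 : E →L[ℝ] ℝ) x :=
    (hasFDerivAt_const 1 x).congr_of_eventuallyEq (h.mono fun y hy => by simp [hy])
  obtain ⟨v, hv⟩ := (r'.toContinuousLinearEquivOfDetNeZero hdet).surjective (r x)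
  -- the derivative of `‖r‖²` in the direction `v` is `2 ⟪r x, r x⟫ = 2`
  have := congr($(hr.norm_sq.unique hconst) v)
  simp only [FunLike.coe_smul, Pi.smul_apply, ContinuousLinearMap.comp_apply,
    innerSL_apply_apply, zero_apply] at this
  rw [ContinuousLinearMap.toContinuousLinearEquivOfDetNeZero_apply] at hv
  rw [hv, real_inner_self_eq_norm_sq, h.self_of_nhds] at this
  norm_num at this

theorem not_mapsTo_sphere_of_contDiffOn {U : Set E} (hU : IsOpen U)
    (hBU : closedBall (0 : E) 1 ⊆ U) {r : E → E} (hr : ContDiffOn ℝ 1 r U)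
    (hsph : ∀ x ∈ sphere (0 : E) 1, r x = x) : ¬MapsTo r (closedBall 0 1) (sphere 0 1) := by
  intro hmaps
  borelize E
  have hvol := setIntegral_det_fderiv_eq_measureReal Measure.addHaar hU hBU hr
    (hmaps.mono_right sphere_subset_closedBall) hsph
  have hdet : ∀ x ∈ ball (0 : E) 1, (fderiv ℝ r x).det = 0 := fun x hx => by
    have hxU := hU.mem_nhds (hBU (ball_subset_closedBall hx))
    refine ((hr.contDiffAt hxU).differentiableAt one_ne_zero).hasFDerivAt
      |>.det_eq_zero_of_eventually_norm_eq_one (mem_of_superset (isOpen_ball.mem_nhds hx) ?_)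
    exact fun y hy => mem_sphere_zero_iff_norm.1 (hmaps (ball_subset_closedBall hy))
  have hzero : ∫ x in closedBall (0 : E) 1, (fderiv ℝ r x).det ∂Measure.addHaar = 0 := by
    refine integral_eq_zero_of_ae ((ae_restrict_iff' measurableSet_closedBall).2 ?_)
    filter_upwards [measure_eq_zero_iff_ae_notMem.1
      (Measure.addHaar_sphere_of_ne_zero Measure.addHaar (0 : E) one_ne_zero)] with x hx hxB
    refine hdet x (mem_ball_zero_iff.2 ((mem_closedBall_zero_iff.1 hxB).lt_of_ne fun h => hx ?_))
    exact mem_sphere_zero_iff_norm.2 h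
  have hpos : 0 < (Measure.addHaar : Measure E).real (closedBall 0 1) :=
    ENNReal.toReal_pos (measure_closedBall_pos _ 0 one_pos).ne' measure_closedBall_lt_top.ne
  linarith

theorem exists_fixedPoint_closedBall_one_of_contDiff {g : E → E} (hg : ContDiff ℝ 1 g)
    (hmaps : MapsTo g (closedBall 0 1) (closedBall 0 1)) : ∃ x ∈ closedBall (0 : E) 1, g x = x := by
  by_contra! hfix
  obtain ⟨U, hU, hBU, r, hr, hrmaps, hsph⟩ := exists_retraction_of_forall_ne hg hmaps hfix
  exact not_mapsTo_sphere_of_contDiffOn hU hBU hr hsph hrmaps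

theorem exists_fixedPoint_closedBall_of_contDiff {g : E → E} (hg : ContDiff ℝ 1 g) {R : ℝ}
    (hR : 0 < R) (hmaps : MapsTo g (closedBall 0 R) (closedBall 0 R)) :
    ∃ x ∈ closedBall (0 : E) R, g x = x := by
  have hscale : ∀ x ∈ closedBall (0 : E) 1, R • x ∈ closedBall (0 : E) R := fun x hx => by
    rw [mem_closedBall_zero_iff, norm_smul, Real.norm_of_nonneg hR.le] at *
    nlinarith
  obtain ⟨x, hx, hfix⟩ := exists_fixedPoint_closedBall_one_of_contDiff
    ((hg.comp (contDiff_id.const_smul R)).const_smul R⁻¹) fun x hx => by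
      have := mem_closedBall_zero_iff.1 (hmaps (hscale x hx))
      rw [mem_closedBall_zero_iff, Function.comp_apply, norm_smul,
        Real.norm_of_nonneg (by positivity)]
      exact (inv_mul_le_one₀ hR).2 this
  refine ⟨R • x, hscale x hx, ?_⟩
  simpa [smul_smul, hR.ne'] using congrArg (R • ·) hfix

theorem InnerProductSpace.exists_fixedPoint_of_isCompact_of_convex {K : Set E}
    (hKne : K.Nonempty) (hKc : IsCompact K) (hKconv : Convex ℝ K) {f : E → E}
    (hf : ContinuousOn f K) (hmaps : MapsTo f K K) : ∃ x ∈ K, f x = x := by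
  obtain ⟨p, hp, hpK, hpid⟩ := exists_lipschitzWith_retraction_of_convex hKne hKc.isComplete hKconv
  set h : E → E := fun x => f (p x)
  have huc : UniformContinuous h :=
    (uniformContinuousOn_iff_restrict.1 (hKc.uniformContinuousOn_of_continuous hf)).comp
      (hp.uniformContinuous.subtype_mk hpK)
  by_contra! hfix
  -- a fixed point of `h` lies in `K`, where `h = f`
  have hne : ∀ x, h x ≠ x := fun x hx => by
    have hxK : x ∈ K := hx ▸ hmaps (hpK x)
    exact hfix x hxK (by simpa [h, hpid x hxK] using hx)
  obtain ⟨R, hR⟩ := hKc.isBounded.subset_closedBall 0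
  have hR₀ : 0 ≤ R := nonempty_closedBall.1 (hKne.mono hR)
  obtain ⟨x₀, -, hmin⟩ := (isCompact_closedBall (0 : E) (R + 1)).exists_isMinOn
    (nonempty_closedBall.2 (by linarith)) (huc.continuous.dist continuous_id).continuousOn
  have hε : 0 < dist (h x₀) x₀ := dist_pos.2 (hne x₀)
  obtain ⟨g, hg, hgh⟩ := huc.exists_contDiff_dist_le (lt_min hε one_pos)
  have hgmaps : MapsTo g (closedBall 0 (R + 1)) (closedBall 0 (R + 1)) := fun x _ => by
    rw [mem_closedBall, add_comm]
    exact (dist_triangle _ (h x) _).trans (add_le_add ((hgh x).le.trans (min_le_right _ _))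
      (hR (hmaps (hpK x))))
  obtain ⟨x, hx, hgx⟩ :=
    exists_fixedPoint_closedBall_of_contDiff (hg.of_le (by simp)) (by linarith) hgmaps
  have hx₀x : dist (h x₀) x₀ ≤ dist (h x) x := hmin hx
  have hclose := (hgh x).trans_le (min_le_left _ _)
  rw [hgx, dist_comm] at hclose
  linarith

end InnerProductSpace

theorem exists_fixedPoint_of_isCompact_of_convex {E : Type*} [NormedAddCommGroup E]
    [NormedSpace ℝ E] [FiniteDimensional ℝ E] {K : Set E} (hKne : K.Nonempty) (hKc : IsCompact K)
    (hKconv : Convex ℝ K) {f : E → E} (hf : ContinuousOn f K) (hmaps : MapsTo f K K) :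
    ∃ x ∈ K, f x = x := by
  set e := toEuclidean (E := E)
  have hsymm : MapsTo e.symm (e '' K) K := by
    rintro _ ⟨x, hx, rfl⟩
    simpa using hx
  obtain ⟨_, ⟨x, hx, rfl⟩, hfix⟩ := InnerProductSpace.exists_fixedPoint_of_isCompact_of_convex
    (hKne.image e) (hKc.image e.continuous)
    (by simpa using hKconv.linear_image e.toLinearEquiv.toLinearMap) (f := e ∘ f ∘ e.symm)
    (e.continuous.comp_continuousOn (hf.comp e.symm.continuous.continuousOn hsymm))
    fun y hy => mem_image_of_mem e (hmaps (hsymm hy))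
  exact ⟨x, hx, e.injective (by simpa using hfix)⟩

theorem knaster_kuratowski_mazurkiewicz {ι : Type*} [Fintype ι] [Nonempty ι]
    (C : ι → Set (ι → ℝ)) (hC : ∀ i, IsClosed (C i))
    (hcover : ∀ x ∈ stdSimplex ℝ ι, ∃ i, x i ≠ 0 ∧ x ∈ C i) :
    ∃ x ∈ stdSimplex ℝ ι, ∀ i, x ∈ C i := by
  classical
  have hCne : ∀ i, (C i).Nonempty := fun i => by
    obtain ⟨j, hj, hjC⟩ := hcover _ (single_mem_stdSimplex ℝ i)
    obtain rfl : j = i := by_contra fun h => hj (Pi.single_eq_of_ne h 1)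
    exact ⟨_, hjC⟩
  set β : (ι → ℝ) → ι → ℝ := fun x i => infDist x (C i)
  set T : (ι → ℝ) → ℝ := fun x => ∑ i, β x i
  have hT : ∀ x, 0 ≤ T x := fun x => Finset.sum_nonneg fun i _ => infDist_nonneg
  -- push every point away from the sets it misses, then renormalize onto the simplex
  set F : (ι → ℝ) → ι → ℝ := fun x => (1 + T x)⁻¹ • (x + β x)
  have hβ : Continuous β := continuous_pi fun i => continuous_infDist_pt (C i)
  have hF : Continuous F :=
    ((continuous_const.add (continuous_finsetSum _ fun i _ => (continuous_apply i).comp hβ)).inv₀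
      fun x => (add_pos_of_pos_of_nonneg one_pos (hT x)).ne').smul (continuous_id.add hβ)
  have hFmaps : MapsTo F (stdSimplex ℝ ι) (stdSimplex ℝ ι) := fun x hx => by
    refine ⟨fun i => ?_, ?_⟩
    · have := hT x
      exact mul_nonneg (by positivity) (add_nonneg (hx.1 i) infDist_nonneg)
    · simp only [F, Pi.smul_apply, Pi.add_apply, smul_eq_mul, ← Finset.mul_sum,
        Finset.sum_add_distrib, hx.2]
      exact inv_mul_cancel₀ (by linarith [hT x])
  obtain ⟨z, hz, hFz⟩ := exists_fixedPoint_of_isCompact_of_convex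
    ⟨_, single_mem_stdSimplex ℝ (Classical.arbitrary ι)⟩ (isCompact_stdSimplex ℝ ι)
    (convex_stdSimplex ℝ ι) hF.continuousOn hFmaps
  have hβz : ∀ i, β z i = T z * z i := fun i => by
    have := congrFun hFz i
    simp only [F, Pi.smul_apply, Pi.add_apply, smul_eq_mul] at this
    field_simp [show 1 + T z ≠ 0 by linarith [hT z]] at this
    linarith
  obtain ⟨i, hi, hiC⟩ := hcover z hz
  have hTz : T z = 0 :=
    (mul_eq_zero.1 ((hβz i).symm.trans (infDist_zero_of_mem hiC))).resolve_right hi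
  refine ⟨z, hz, fun j => ((hC j).mem_iff_infDist_zero (hCne j)).2 ?_⟩
  simpa [hTz] using hβz j

theorem Finset.nonempty_biInter_of_convexHull_subset {E : Type*} [AddCommGroup E] [Module ℝ E]
    [TopologicalSpace E] [IsTopologicalAddGroup E] [ContinuousSMul ℝ E] {u : Finset E}
    (hu : u.Nonempty) {T : E → Set E} (hT : ∀ x ∈ u, IsClosed (T x))
    (hcover : ∀ s ⊆ u, convexHull ℝ (s : Set E) ⊆ ⋃ x ∈ s, T x) : (⋂ x ∈ u, T x).Nonempty := by
  classical
  have : Nonempty u := hu.coe_sort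
  set φ : (u → ℝ) → E := fun ξ => ∑ j, ξ j • (j : E)
  have hφ : Continuous φ :=
    continuous_finsetSum _ fun j _ => (continuous_apply j).smul continuous_const
  have hcover' : ∀ ξ ∈ stdSimplex ℝ u, ∃ i : u, ξ i ≠ 0 ∧ ξ ∈ φ ⁻¹' T i := by
    intro ξ hξ
    set t := Finset.univ.filter fun j : u => ξ j ≠ 0
    have hsum : ∑ j ∈ t, ξ j = 1 := by rw [Finset.sum_filter_ne_zero, hξ.2]
    have hφt : t.centerMass ξ (↑) = φ ξ := by
      rw [Finset.centerMass_eq_of_sum_1 _ _ hsum]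
      exact Finset.sum_filter_of_ne fun j _ h => left_ne_zero_of_smul h
    have hmem : φ ξ ∈ convexHull ℝ ↑(t.map (Function.Embedding.subtype (· ∈ u))) :=
      hφt ▸ t.centerMass_mem_convexHull (fun j _ => hξ.1 j) (by rw [hsum]; exact one_pos)
        fun j hj => Finset.mem_map_of_mem _ hj
    obtain ⟨x, hx, hxT⟩ := mem_iUnion₂.1 (hcover _ (fun x hx => by
      obtain ⟨j, -, rfl⟩ := Finset.mem_map.1 hx; exact j.2) hmem)
    obtain ⟨j, hj, rfl⟩ := Finset.mem_map.1 hx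
    exact ⟨j, (Finset.mem_filter.1 hj).2, hxT⟩
  obtain ⟨ξ, -, hξ⟩ := knaster_kuratowski_mazurkiewicz (fun i : u => φ ⁻¹' T i)
    (fun i => (hT i i.2).preimage hφ) hcover'
  exact ⟨φ ξ, mem_iInter₂.2 fun x hx => hξ ⟨x, hx⟩⟩

theorem IsClosed.of_isClosed_toWeakSpace_image {E : Type*} [NormedAddCommGroup E]
    [NormedSpace ℝ E] {s : Set E} (hs : IsClosed (toWeakSpace ℝ E '' s)) : IsClosed s := by
  have := hs.preimage (toWeakSpaceCLM ℝ E).continuous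
  rwa [show ⇑(toWeakSpaceCLM ℝ E) = toWeakSpace ℝ E from
    _root_.funext (toWeakSpaceCLM_eq_toWeakSpace ℝ E), (toWeakSpace ℝ E).injective.preimage_image]
    at this

theorem generalized_FKKM_general
    {E : Type*} [NormedAddCommGroup E] [NormedSpace ℝ E]
    (X : Set E) (T : E → Set E)
    (h1 : ∀ x ∈ X, (T x).Nonempty ∧ IsClosed (toWeakSpace ℝ E '' T x))
    (x₀ : E) (hx₀ : x₀ ∈ X)
    (h2 : IsCompact (toWeakSpace ℝ E '' T x₀))
    (h3 : ∀ s : Finset E, ↑s ⊆ X →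
      convexHull ℝ (↑s : Set E) ⊆ ⋃ x ∈ s, T x) :
    (⋂ x ∈ X, (T x ∩ T x₀)).Nonempty ∧ (⋂ x ∈ X, T x).Nonempty := by
  classical
  set W := toWeakSpace ℝ E
  have hfinite : ∀ v : Finset X, (W '' T x₀ ∩ ⋂ x ∈ v, W '' T x).Nonempty := fun v => by
    set u := insert x₀ (v.map (Function.Embedding.subtype (· ∈ X)))
    have huX : ↑u ⊆ X := by
      simp [u, Set.insert_subset_iff, hx₀]
    obtain ⟨y, hy⟩ := Finset.nonempty_biInter_of_convexHull_subset (Finset.insert_nonempty _ _)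
      (fun x hx => (h1 x (huX hx)).2.of_isClosed_toWeakSpace_image)
      fun s hs => h3 s ((Finset.coe_subset.2 hs).trans huX)
    exact ⟨W y, mem_image_of_mem W (mem_iInter₂.1 hy x₀ (Finset.mem_insert_self _ _)),
      mem_iInter₂.2 fun x hx => mem_image_of_mem W (mem_iInter₂.1 hy x
        (Finset.mem_insert_of_mem (Finset.mem_map_of_mem _ hx)))⟩
  obtain ⟨_, ⟨y, hy₀, rfl⟩, hy⟩ := h2.inter_iInter_nonempty (fun x : X => W '' T x)
    (fun x => (h1 x x.2).2) hfinite
  have hyT : ∀ x ∈ X, y ∈ T x := fun x hx => by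
    obtain ⟨z, hz, hzy⟩ := mem_iInter.1 hy ⟨x, hx⟩
    rwa [← W.injective hzy]
  exact ⟨⟨y, mem_iInter₂.2 fun x hx => ⟨hyT x hx, hy₀⟩⟩, ⟨y, mem_iInter₂.2 hyT⟩⟩

/-- **Generalized FKKM lemma.** Let `X` be a nonempty subset of a Banach space `E` and
`T : X → 2^E` a set-valued map such that (1) each `T x` is nonempty and weakly closed,
(2) `T x₀` is weakly compact for some `x₀ ∈ X`, and (3) the convex hull of every finite
subset `{x₁, …, xₙ} ⊆ X` is contained in `⋃ i, T xᵢ`.  Then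
`⋂_{x ∈ X} (T x ∩ T x₀) ≠ ∅`, and in particular `⋂_{x ∈ X} T x ≠ ∅`. -/
theorem generalized_FKKM
    {E : Type*} [NormedAddCommGroup E] [NormedSpace ℝ E] [CompleteSpace E]
    (X : Set E) (hX : X.Nonempty) (T : E → Set E)
    (h1 : ∀ x ∈ X, (T x).Nonempty ∧ IsClosed (toWeakSpace ℝ E '' T x))
    (x₀ : E) (hx₀ : x₀ ∈ X)
    (h2 : IsCompact (toWeakSpace ℝ E '' T x₀))
    (h3 : ∀ s : Finset E, ↑s ⊆ X →
      convexHull ℝ (↑s : Set E) ⊆ ⋃ x ∈ s, T x) :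
    (⋂ x ∈ X, (T x ∩ T x₀)).Nonempty ∧ (⋂ x ∈ X, T x).Nonempty :=
  generalized_FKKM_general X T h1 x₀ hx₀ h2 h3
end

section
/- Let X be a nonempty convex subset of a real vector space E and let f : X × X → ℝ satisfy: for every fixed y ∈ X, x ↦ f(x,y) is quasi-concave on X, and m := sup_{x∈X} f(x,x) < +∞. Define T(x) := {y ∈ X : f(x,y) ≤ m}. Then for every finite set {x₁,…,xₙ} ⊆ X, the convex hull co{x₁,…,xₙ} is contained in ⋃_{i=1}^n T(xᵢ). -/
/-- If `X` is a nonempty convex subset of a real vector space `E`, `x ↦ f x y` is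
quasi-concave on `X` for each fixed `y ∈ X`, and `m := ⨆_{x ∈ X} f x x < +∞`, then for
every finite subset `{x₁, …, xₙ} ⊆ X` the convex hull `co {x₁, …, xₙ}` is contained in
`⋃ i, T xᵢ`, where `T x := {y ∈ X | f x y ≤ m}`. -/
theorem convexHull_subset_union_sublevel
    {E : Type*} [AddCommGroup E] [Module ℝ E]
    (X : Set E) (hX : X.Nonempty) (hXconv : Convex ℝ X)
    (f : E → E → ℝ)
    (hi : ∀ y ∈ X, ∀ l : ℝ, Convex ℝ {x ∈ X | l ≤ f x y})
    (hiii : (⨆ x ∈ X, (f x x : EReal)) < ⊤) :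
    ∀ s : Finset E, ↑s ⊆ X →
      convexHull ℝ (↑s : Set E) ⊆
        ⋃ x ∈ s, {y ∈ X | (f x y : EReal) ≤ (⨆ x ∈ X, (f x x : EReal))} := by
  intro s hs y hy
  set m : EReal := ⨆ x ∈ X, (f x x : EReal) with hm
  by_contra h
  have hyX : y ∈ X := convexHull_min hs hXconv hy
  simp only [Set.mem_iUnion, Set.mem_setOf_eq, not_exists, not_and] at h
  have hlt : ∀ x ∈ s, m < (f x y : EReal) := fun x hx => not_le.mp (h x hx hyX)
  have hs' : s.Nonempty := by
    rcases Finset.eq_empty_or_nonempty s with rfl | h'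
    · simp at hy
    · exact h'
  set l : ℝ := s.inf' hs' (fun x => f x y) with hl
  have hsub : (↑s : Set E) ⊆ {x ∈ X | l ≤ f x y} := by
    intro x hx
    exact ⟨hs hx, Finset.inf'_le _ hx⟩
  have hyl : l ≤ f y y :=
    (convexHull_min hsub (hi y hyX l) hy).2
  have hym : (f y y : EReal) ≤ m := le_iSup₂ (f := fun x (_ : x ∈ X) => (f x x : EReal)) y hyX
  obtain ⟨x₀, hx₀, hx₀eq⟩ := Finset.exists_mem_eq_inf' hs' (fun x => f x y)
  have hml : m < (l : EReal) := by rw [hl, hx₀eq]; exact hlt x₀ hx₀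
  have : (l : EReal) ≤ m := le_trans (EReal.coe_le_coe_iff.mpr hyl) hym
  exact absurd this (not_le.mpr hml)
end
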